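/- For every real number x with 0 ≤ x ≤ 1, the inequalities arcsin x ≤ π(√2 + 1/2)·(√(1 + x) − √(1 − x))/(4 + √(1 + x) + √(1 − x)) ≤ πx/(2 + √(1 − x²)) hold. -/

import Mathlib

/-!
Substituting `x = sin (2φ)` with `0 ≤ φ ≤ π / 4` gives `√(1 ± x) = cos φ ± sin φ` and
`√(1 - x²) = cos (2φ)`, so with `K = π (√2 + 1/2)` the middle term becomes `K sin φ / (2 + cos φ)`.
The left inequality is then `2φ (2 + cos φ) ≤ K sin φ`: the difference of the two sides is concave
on `[0, π/2]` (its second derivative is `(4 - K) sin φ + 2φ cos φ < (6 - K) sin φ ≤ 0`) and vanishes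
at `0` and at `π / 4`. The right inequality reduces to a quadratic inequality in `c = cos φ` on
`[√2/2, 1]` that is an equality at `c = √2/2`.
-/

open Real Set

noncomputable def zhuGap (K φ : ℝ) : ℝ := K * sin φ - 2 * φ * (2 + cos φ)

lemma hasDerivAt_zhuGap (K φ : ℝ) :
    HasDerivAt (zhuGap K) (K * cos φ - 2 * (2 + cos φ) + 2 * φ * sin φ) φ := by
  refine (((hasDerivAt_sin φ).const_mul K).sub
    (((hasDerivAt_id' φ).const_mul 2).mul ((hasDerivAt_cos φ).const_add 2))).congr_deriv ?_
  ring

lemma deriv_zhuGap (K : ℝ) :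
    deriv (zhuGap K) = fun φ ↦ K * cos φ - 2 * (2 + cos φ) + 2 * φ * sin φ :=
  funext fun φ ↦ (hasDerivAt_zhuGap K φ).deriv

lemma hasDerivAt_deriv_zhuGap (K φ : ℝ) :
    HasDerivAt (deriv (zhuGap K)) ((4 - K) * sin φ + 2 * φ * cos φ) φ := by
  rw [deriv_zhuGap]
  refine ((((hasDerivAt_cos φ).const_mul K).sub
    (((hasDerivAt_cos φ).const_add 2).const_mul 2)).add
    (((hasDerivAt_id' φ).const_mul 2).mul (hasDerivAt_sin φ))).congr_deriv ?_
  ring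

lemma mul_cos_lt_sin {x : ℝ} (hx₀ : 0 < x) (hx : x < π / 2) : x * cos x < sin x := by
  have hcos : 0 < cos x := cos_pos_of_mem_Ioo ⟨by linarith, hx⟩
  simpa [tan_eq_sin_div_cos, lt_div_iff₀ hcos] using lt_tan hx₀ hx

lemma strictConcaveOn_zhuGap {K : ℝ} (hK : 6 ≤ K) :
    StrictConcaveOn ℝ (Icc 0 (π / 2)) (zhuGap K) := by
  refine strictConcaveOn_of_deriv2_neg (convex_Icc _ _)
    (fun φ _ ↦ (hasDerivAt_zhuGap K φ).continuousAt.continuousWithinAt) fun φ hφ ↦ ?_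
  rw [interior_Icc] at hφ
  rw [Function.iterate_succ_apply, Function.iterate_one, (hasDerivAt_deriv_zhuGap K φ).deriv]
  have hsin : 0 < sin φ := sin_pos_of_pos_of_lt_pi hφ.1 (by linarith [hφ.2, pi_pos])
  nlinarith [mul_cos_lt_sin hφ.1 hφ.2]

lemma six_le_pi_mul_sqrt_two_add_half : 6 ≤ π * (√2 + 1 / 2) := by
  have hsqrt : 1.414 < √2 := lt_sqrt_of_sq_lt (by norm_num)
  nlinarith [pi_gt_d4]

lemma zhuGap_pi_div_four : zhuGap (π * (√2 + 1 / 2)) (π / 4) = 0 := by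
  rw [zhuGap, sin_pi_div_four, cos_pi_div_four]
  linear_combination π / 2 * sq_sqrt (zero_le_two : (0 : ℝ) ≤ 2)

lemma zhuGap_nonneg {φ : ℝ} (hφ₀ : 0 ≤ φ) (hφ : φ ≤ π / 4) :
    0 ≤ zhuGap (π * (√2 + 1 / 2)) φ := by
  have hmin := (strictConcaveOn_zhuGap six_le_pi_mul_sqrt_two_add_half).concaveOn.min_le_of_mem_Icc
    (x := 0) (y := π / 4) ⟨le_rfl, by positivity⟩ ⟨by positivity, by linarith [pi_pos]⟩ ⟨hφ₀, hφ⟩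
  rwa [zhuGap_pi_div_four, show zhuGap _ 0 = 0 by simp [zhuGap], min_self] at hmin

lemma sqrt_two_add_half_mul_le {c : ℝ} (hc₀ : √2 / 2 ≤ c) (hc : c ≤ 1) :
    (√2 + 1 / 2) * (1 + 2 * c ^ 2) ≤ 2 * c * (2 + c) := by
  have h2 : √2 ^ 2 = 2 := sq_sqrt zero_le_two
  have hsqrt : √2 < 2 := (sqrt_lt' two_pos).2 (by norm_num)
  -- the difference is `(c - √2 / 2) * (2 + √2 / 2 - (2 * √2 - 1) * c)`
  have hfactor : 0 ≤ 2 + √2 / 2 - (2 * √2 - 1) * c := by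
    nlinarith [mul_nonneg (by linarith [one_lt_sqrt_two] : (0 : ℝ) ≤ 2 * √2 - 1) (sub_nonneg.2 hc)]
  nlinarith [mul_nonneg (sub_nonneg.2 hc₀) hfactor]

lemma zhu_bounds_angle {φ : ℝ} (hφ₀ : 0 ≤ φ) (hφ : φ ≤ π / 4) :
    2 * φ ≤ π * (√2 + 1 / 2) * sin φ / (2 + cos φ) ∧
      π * (√2 + 1 / 2) * sin φ / (2 + cos φ) ≤ π * sin (2 * φ) / (2 + cos (2 * φ)) := by
  have hcos : √2 / 2 ≤ cos φ := by
    rw [← cos_pi_div_four]; exact cos_le_cos_of_nonneg_of_le_pi hφ₀ (by linarith [pi_pos]) hφ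
  have hsin : 0 ≤ sin φ := sin_nonneg_of_nonneg_of_le_pi hφ₀ (by linarith [pi_pos])
  have hcos2 : 2 + cos (2 * φ) = 1 + 2 * cos φ ^ 2 := by rw [cos_two_mul]; ring
  have hpos : 0 < 2 + cos φ := by linarith [neg_one_le_cos φ]
  constructor
  · rw [le_div_iff₀ hpos]
    have := zhuGap_nonneg hφ₀ hφ
    rw [zhuGap] at this
    linarith
  · rw [sin_two_mul, hcos2, div_le_div_iff₀ hpos (by positivity)]
    have := mul_le_mul_of_nonneg_left (sqrt_two_add_half_mul_le hcos (cos_le_one φ))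
      (mul_nonneg pi_pos.le hsin)
    linear_combination this

lemma sqrt_one_add_sin_two_mul (φ : ℝ) : √(1 + sin (2 * φ)) = |cos φ + sin φ| := by
  rw [← sqrt_sq_eq_abs, sin_two_mul]
  congr 1
  linear_combination -sin_sq_add_cos_sq φ

lemma sqrt_one_sub_sin_two_mul (φ : ℝ) : √(1 - sin (2 * φ)) = |cos φ - sin φ| := by
  rw [← sqrt_sq_eq_abs, sin_two_mul]
  congr 1
  linear_combination -sin_sq_add_cos_sq φ

theorem zhu_upper_bounds (x : ℝ) (hx : 0 ≤ x) (hx' : x ≤ 1) :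
    Real.arcsin x ≤
      Real.pi * (Real.sqrt 2 + 1 / 2) * (Real.sqrt (1 + x) - Real.sqrt (1 - x)) /
        (4 + Real.sqrt (1 + x) + Real.sqrt (1 - x)) ∧
    Real.pi * (Real.sqrt 2 + 1 / 2) * (Real.sqrt (1 + x) - Real.sqrt (1 - x)) /
        (4 + Real.sqrt (1 + x) + Real.sqrt (1 - x)) ≤
      Real.pi * x / (2 + Real.sqrt (1 - x ^ 2)) := by
  obtain ⟨φ, harcsin⟩ : ∃ φ, arcsin x = 2 * φ := ⟨arcsin x / 2, by ring⟩
  have hφ₀ : 0 ≤ φ := by linarith [arcsin_nonneg.2 hx]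
  have hφ : φ ≤ π / 4 := by linarith [arcsin_le_pi_div_two x]
  have hx_eq : sin (2 * φ) = x := by rw [← harcsin, sin_arcsin (by linarith) hx']
  have hsqrt : √(1 - x ^ 2) = cos (2 * φ) := by rw [← cos_arcsin, harcsin]
  have hsin : 0 ≤ sin φ := sin_nonneg_of_nonneg_of_le_pi hφ₀ (by linarith [pi_pos])
  have hsc : sin φ ≤ cos φ := by
    rw [← cos_pi_div_two_sub]
    exact cos_le_cos_of_nonneg_of_le_pi hφ₀ (by linarith) (by linarith)
  have hpos : 0 < 2 + cos φ := by linarith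
  have hmid : π * (√2 + 1 / 2) * (√(1 + x) - √(1 - x)) / (4 + √(1 + x) + √(1 - x)) =
      π * (√2 + 1 / 2) * sin φ / (2 + cos φ) := by
    rw [← hx_eq, sqrt_one_add_sin_two_mul, sqrt_one_sub_sin_two_mul,
      abs_of_nonneg (by linarith), abs_of_nonneg (by linarith),
      div_eq_div_iff (by linarith) hpos.ne']
    ring
  rw [harcsin, hmid, hsqrt, ← hx_eq]
  exact zhu_bounds_angle hφ₀ hφ
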